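/- arXiv:2510.17607 — 2 statements merged into one kernel-verified Lean document; each statement's English description precedes it below -/
import Mathlib

section
/- Let (C,d_C) and (D,d_D) be nonarchimedean normed chain complexes over K, where the absolute value of K is surjective onto the positive reals. Let f : C → D be a continuous K-linear chain map (f∘d_C = d_D∘f) with ‖f(x)‖ ≤ ‖x‖ for all x ∈ C, and suppose the induced O-module map H(C_{>0}) → H(D_{>0}) is an isomorphism (f is a filtered quasi-isomorphism). Then the boundary depths agree: β(C,d_C) = β(D,d_D). -/
open scoped ENNReal

open Classical in
/-- The boundary depth `β(C,d) ∈ [0,∞]` of a norm-nonincreasing differential `d` on a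
nonarchimedean normed chain complex `C`. -/
noncomputable def boundaryDepth {C : Type*} [NormedAddCommGroup C] (d : C → C) : ℝ≥0∞ :=
  if ∀ x, d x = 0 then 0
  else
    ⨆ x ∈ {x : C | x ≠ 0 ∧ ∃ y, d y = x},
      ⨅ y ∈ {y : C | d y = x}, ENNReal.ofReal (Real.log ‖y‖ - Real.log ‖x‖)

open scoped Pointwise

/-!
The boundary depth `β(d)` is the infimum of the `M` such that every nonzero boundary `x` has a
primitive of norm `< e^M ‖x‖`, and a filtered quasi-isomorphism transfers such bounds (up to an
arbitrarily small loss) in both directions. For a boundary `x` of `C`, `f x` has a primitive of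
norm `< e^M ‖x‖`, so injectivity on homology below that radius gives a primitive of `x` of the
same size. For a boundary `x` of `D`, surjectivity on homology below a radius `r` just above
`‖x‖` writes `x = f u - d_D v` with `u` a cycle and `‖u‖, ‖v‖ < r`; injectivity makes `u` a
boundary `d_C y'` with `‖y'‖ ≤ e^M ‖u‖`, and by the ultrametric inequality `f y' - v` is a
primitive of `x` of norm `< e^M r`. The hypotheses are stated at radius `1`; as `‖K‖` is onto the
positive reals, rescaling by scalars moves them to every radius.
-/

section BoundedPrimitives

variable {C : Type*} [NormedAddCommGroup C]

def HasBoundedPrimitives (d : C → C) (c : ℝ) : Prop :=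
  ∀ x ∈ Set.range d, x ≠ 0 → ∃ y, d y = x ∧ ‖y‖ < c * ‖x‖

theorem HasBoundedPrimitives.exists_norm_le {d : C → C} {c : ℝ}
    (h : HasBoundedPrimitives d c) (hd : d 0 = 0) {x : C} (hx : x ∈ Set.range d) :
    ∃ y, d y = x ∧ ‖y‖ ≤ c * ‖x‖ := by
  rcases eq_or_ne x 0 with rfl | hx0
  · exact ⟨0, hd, by simp⟩
  · obtain ⟨y, hy, hlt⟩ := h x hx hx0
    exact ⟨y, hy, hlt.le⟩

theorem boundaryDepth_le_ofReal {d : C → C} (hd : d 0 = 0) {M : ℝ}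
    (h : HasBoundedPrimitives d (Real.exp M)) : boundaryDepth d ≤ ENNReal.ofReal M := by
  unfold boundaryDepth
  split_ifs
  · exact zero_le
  refine iSup₂_le fun x ⟨hx, hrange⟩ => ?_
  obtain ⟨y, rfl, hy⟩ := h _ hrange hx
  have hy0 : y ≠ 0 := by rintro rfl; exact hx hd
  refine iInf₂_le_of_le y rfl (ENNReal.ofReal_le_ofReal ?_)
  have hlog := Real.log_lt_log (norm_pos_iff.2 hy0) hy
  rw [Real.log_mul (Real.exp_ne_zero M) (norm_ne_zero_iff.2 hx), Real.log_exp] at hlog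
  linarith

theorem hasBoundedPrimitives_of_boundaryDepth_lt {d : C → C} {M : ℝ}
    (h : boundaryDepth d < ENNReal.ofReal M) : HasBoundedPrimitives d (Real.exp M) := by
  rintro x ⟨z, rfl⟩ hx
  have hM : 0 < M := ENNReal.ofReal_pos.1 (pos_of_gt h)
  have hx0 : 0 < ‖d z‖ := norm_pos_iff.2 hx
  rw [boundaryDepth, if_neg fun h0 => hx (h0 z)] at h
  obtain ⟨y, hy, hlt⟩ : ∃ y ∈ {y : C | d y = d z},
      ENNReal.ofReal (Real.log ‖y‖ - Real.log ‖d z‖) < ENNReal.ofReal M := by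
    simpa only [iInf_lt_iff, exists_prop] using (le_iSup₂ (d z) ⟨hx, z, rfl⟩).trans_lt h
  rw [ENNReal.ofReal_lt_ofReal_iff hM] at hlt
  refine ⟨y, hy, ?_⟩
  rcases eq_or_ne y 0 with rfl | hy0
  · simpa using mul_pos (Real.exp_pos M) hx0
  · calc ‖y‖ < Real.exp (M + Real.log ‖d z‖) :=
          (Real.log_lt_iff_lt_exp (norm_pos_iff.2 hy0)).1 (by linarith)
      _ = Real.exp M * ‖d z‖ := by rw [Real.exp_add, Real.exp_log hx0]

theorem boundaryDepth_le_of_hasBoundedPrimitives {D : Type*} [NormedAddCommGroup D]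
    {d : C → C} {d' : D → D} (hd : d 0 = 0)
    (h : ∀ c c', 1 ≤ c → c < c' → HasBoundedPrimitives d' c → HasBoundedPrimitives d c') :
    boundaryDepth d ≤ boundaryDepth d' := by
  refine le_of_forall_gt_imp_ge_of_dense fun t ht => ?_
  rcases eq_or_ne t ⊤ with rfl | ht_top
  · exact le_top
  obtain ⟨s, hs, hst⟩ := exists_between ht
  have hst_real : s.toReal < t.toReal := ENNReal.toReal_strict_mono ht_top hst
  rw [← ENNReal.ofReal_toReal (ne_top_of_lt hst)] at hs
  rw [← ENNReal.ofReal_toReal ht_top]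
  exact boundaryDepth_le_ofReal hd <| h _ _ (Real.one_le_exp ENNReal.toReal_nonneg)
    (Real.exp_lt_exp.2 hst_real) (hasBoundedPrimitives_of_boundaryDepth_lt hs)

end BoundedPrimitives

section FilteredQuasiIso

variable {K : Type*} [NormedField K]
  {C : Type*} [NormedAddCommGroup C] [NormedSpace K C]
  {D : Type*} [NormedAddCommGroup D] [NormedSpace K D]

theorem smul_mem_image_norm_lt_iff (g : C →L[K] D) {a : K} (ha : a ≠ 0) {x : D} {r : ℝ} :
    a • x ∈ ⇑g '' {y | ‖y‖ < ‖a‖ * r} ↔ x ∈ ⇑g '' {y | ‖y‖ < r} := by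
  have hball : a • Metric.ball (0 : C) r = Metric.ball 0 (‖a‖ * r) := by
    rw [smul_ball ha, smul_zero]
  rw [← ball_zero_eq, ← ball_zero_eq, ← hball, image_smul_set, Set.smul_mem_smul_set_iff₀ ha]

/-- `f` induces an injection `H(C_{<r}) → H(D_{<r})`; the paper's `H(C_{>0})` is `r = 1`. -/
def InjectiveOnHomologyBelow (dC : C →L[K] C) (dD : D →L[K] D) (f : C →L[K] D) (r : ℝ) :
    Prop :=
  ∀ x : C, ‖x‖ < r → dC x = 0 → f x ∈ ⇑dD '' {w : D | ‖w‖ < r} → x ∈ ⇑dC '' {y : C | ‖y‖ < r}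

/-- `f` induces a surjection `H(C_{<r}) → H(D_{<r})`. -/
def SurjectiveOnHomologyBelow (dC : C →L[K] C) (dD : D →L[K] D) (f : C →L[K] D) (r : ℝ) :
    Prop :=
  ∀ w : D, ‖w‖ < r → dD w = 0 →
    ∃ x : C, ‖x‖ < r ∧ dC x = 0 ∧ f x - w ∈ ⇑dD '' {w' : D | ‖w'‖ < r}

variable {dC : C →L[K] C} {dD : D →L[K] D} {f : C →L[K] D}

theorem InjectiveOnHomologyBelow.rescale (hK : ∀ r : ℝ, 0 < r → ∃ a : K, ‖a‖ = r)
    {s r : ℝ} (hs : 0 < s) (hr : 0 < r) (h : InjectiveOnHomologyBelow dC dD f s) :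
    InjectiveOnHomologyBelow dC dD f r := by
  obtain ⟨a, ha⟩ := hK (s / r) (div_pos hs hr)
  have ha0 : 0 < ‖a‖ := ha ▸ div_pos hs hr
  obtain rfl : s = ‖a‖ * r := by rw [ha, div_mul_cancel₀ s hr.ne']
  intro x hx hdx hfx
  rw [← smul_mem_image_norm_lt_iff dC (norm_pos_iff.1 ha0)]
  refine h (a • x) ?_ (by rw [map_smul, hdx, smul_zero]) ?_
  · rw [norm_smul]
    exact mul_lt_mul_of_pos_left hx ha0
  · rw [map_smul]
    exact (smul_mem_image_norm_lt_iff dD (norm_pos_iff.1 ha0)).2 hfx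

theorem SurjectiveOnHomologyBelow.rescale (hK : ∀ r : ℝ, 0 < r → ∃ a : K, ‖a‖ = r)
    {s r : ℝ} (hs : 0 < s) (hr : 0 < r) (h : SurjectiveOnHomologyBelow dC dD f s) :
    SurjectiveOnHomologyBelow dC dD f r := by
  obtain ⟨a, ha⟩ := hK (s / r) (div_pos hs hr)
  have ha0 : 0 < ‖a‖ := ha ▸ div_pos hs hr
  obtain rfl : s = ‖a‖ * r := by rw [ha, div_mul_cancel₀ s hr.ne']
  intro w hw hdw
  obtain ⟨x, hx, hdx, hfx⟩ := h (a • w) (by rw [norm_smul]; exact mul_lt_mul_of_pos_left hw ha0)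
    (by rw [map_smul, hdw, smul_zero])
  refine ⟨a⁻¹ • x, ?_, by rw [map_smul, hdx, smul_zero], ?_⟩
  · rw [norm_smul, norm_inv]
    exact (inv_mul_lt_iff₀ ha0).2 hx
  · rw [← smul_mem_image_norm_lt_iff dD (norm_pos_iff.1 ha0), smul_sub, ← map_smul,
      smul_inv_smul₀ (norm_pos_iff.1 ha0)]
    exact hfx

theorem mem_range_of_map_mem_range (hinj : ∀ r, 0 < r → InjectiveOnHomologyBelow dC dD f r)
    {u : C} (hu : dC u = 0) (hfu : f u ∈ Set.range dD) : u ∈ Set.range dC := by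
  obtain ⟨w, hw⟩ := hfu
  have hR : 0 < max ‖u‖ ‖w‖ + 1 := by positivity
  obtain ⟨y, -, hy⟩ := hinj _ hR u (by linarith [le_max_left ‖u‖ ‖w‖]) hu
    ⟨w, show ‖w‖ < _ by linarith [le_max_right ‖u‖ ‖w‖], hw⟩
  exact ⟨y, hy⟩

theorem hasBoundedPrimitives_of_injectiveOnHomologyBelow (hdC : ∀ x, dC (dC x) = 0)
    (hchain : ∀ x, f (dC x) = dD (f x)) (hf : ∀ x, ‖f x‖ ≤ ‖x‖)
    (hinj : ∀ r, 0 < r → InjectiveOnHomologyBelow dC dD f r) {c c' : ℝ} (hc : 1 ≤ c)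
    (hcc' : c < c') (hD : HasBoundedPrimitives dD c) : HasBoundedPrimitives dC c' := by
  rintro x ⟨z, rfl⟩ hx
  have hx0 : 0 < ‖dC z‖ := norm_pos_iff.2 hx
  obtain ⟨v, hv, hv_le⟩ := hD.exists_norm_le (map_zero dD) ⟨f z, (hchain z).symm⟩
  have hv_lt : ‖v‖ < c' * ‖dC z‖ :=
    calc ‖v‖ ≤ c * ‖f (dC z)‖ := hv_le
      _ ≤ c * ‖dC z‖ := by gcongr; exact hf _
      _ < c' * ‖dC z‖ := by gcongr
  obtain ⟨y, hy, hyd⟩ := hinj (c' * ‖dC z‖) (mul_pos (by linarith) hx0) (dC z)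
    (lt_mul_left hx0 (by linarith)) (hdC z) ⟨v, hv_lt, hv⟩
  exact ⟨y, hyd, hy⟩

theorem hasBoundedPrimitives_of_surjectiveOnHomologyBelow [IsUltrametricDist D]
    (hdD : ∀ x, dD (dD x) = 0) (hchain : ∀ x, f (dC x) = dD (f x)) (hf : ∀ x, ‖f x‖ ≤ ‖x‖)
    (hinj : ∀ r, 0 < r → InjectiveOnHomologyBelow dC dD f r)
    (hsurj : ∀ r, 0 < r → SurjectiveOnHomologyBelow dC dD f r) {c c' : ℝ} (hc : 1 ≤ c)
    (hcc' : c < c') (hC : HasBoundedPrimitives dC c) : HasBoundedPrimitives dD c' := by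
  rintro x ⟨w, rfl⟩ hx
  have hx0 : 0 < ‖dD w‖ := norm_pos_iff.2 hx
  have hc0 : 0 < c := one_pos.trans_le hc
  set r := c' / c * ‖dD w‖ with hr
  have hxr : ‖dD w‖ < r := lt_mul_left hx0 ((one_lt_div hc0).2 hcc')
  obtain ⟨u, hu, hdu, v, hv, hvu⟩ := hsurj r (hx0.trans hxr) (dD w) hxr (hdD w)
  have hu_range : u ∈ Set.range dC :=
    mem_range_of_map_mem_range hinj hdu ⟨w + v, by rw [map_add, hvu]; abel⟩
  obtain ⟨y', hy', hy'_le⟩ := hC.exists_norm_le (map_zero dC) hu_range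
  refine ⟨f y' - v, by rw [map_sub, ← hchain, hy', hvu, sub_sub_cancel], ?_⟩
  have hfy' : ‖f y'‖ < c * r :=
    calc ‖f y'‖ ≤ ‖y'‖ := hf y'
      _ ≤ c * ‖u‖ := hy'_le
      _ < c * r := mul_lt_mul_of_pos_left hu hc0
  calc ‖f y' - v‖ ≤ max ‖f y'‖ ‖v‖ := by
        simpa [sub_eq_add_neg] using IsUltrametricDist.norm_add_le_max (f y') (-v)
    _ < c * r := max_lt hfy' (hv.trans_le (le_mul_of_one_le_left (hx0.trans hxr).le hc))
    _ = c' * ‖dD w‖ := by rw [hr]; field_simp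

end FilteredQuasiIso

theorem boundaryDepth_eq_of_filteredQuasiIso_general
    {K : Type*} [NormedField K]
    (hsurj : ∀ r : ℝ, 0 < r → ∃ a : K, ‖a‖ = r)
    {C : Type*} [NormedAddCommGroup C] [NormedSpace K C]
    {D : Type*} [NormedAddCommGroup D] [NormedSpace K D]
    [IsUltrametricDist D]
    (dC : C →L[K] C) (hdC2 : ∀ x, dC (dC x) = 0)
    (dD : D →L[K] D) (hdD2 : ∀ x, dD (dD x) = 0)
    (f : C →L[K] D) (hchain : ∀ x, f (dC x) = dD (f x)) (hf1 : ∀ x, ‖f x‖ ≤ ‖x‖)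
    (hinj : ∀ x : C, ‖x‖ < 1 → dC x = 0 →
      f x ∈ ⇑dD '' {w : D | ‖w‖ < 1} → x ∈ ⇑dC '' {y : C | ‖y‖ < 1})
    (hsurjH : ∀ w : D, ‖w‖ < 1 → dD w = 0 →
      ∃ x : C, ‖x‖ < 1 ∧ dC x = 0 ∧ f x - w ∈ ⇑dD '' {w' : D | ‖w'‖ < 1}) :
    boundaryDepth (fun x => dC x) = boundaryDepth (fun x => dD x) := by
  have hinj_r (r : ℝ) (hr : 0 < r) : InjectiveOnHomologyBelow dC dD f r :=
    InjectiveOnHomologyBelow.rescale hsurj one_pos hr hinj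
  have hsurj_r (r : ℝ) (hr : 0 < r) : SurjectiveOnHomologyBelow dC dD f r :=
    SurjectiveOnHomologyBelow.rescale hsurj one_pos hr hsurjH
  apply le_antisymm
  · exact boundaryDepth_le_of_hasBoundedPrimitives (map_zero dC) fun _ _ hc hcc' =>
      hasBoundedPrimitives_of_injectiveOnHomologyBelow hdC2 hchain hf1 hinj_r hc hcc'
  · exact boundaryDepth_le_of_hasBoundedPrimitives (map_zero dD) fun _ _ hc hcc' =>
      hasBoundedPrimitives_of_surjectiveOnHomologyBelow hdD2 hchain hf1 hinj_r hsurj_r hc hcc'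

/-- A filtered quasi-isomorphism preserves boundary depth: if
`f : C → D` is a continuous norm-nonincreasing chain map between nonarchimedean normed
chain complexes over a complete nonarchimedean field `K` with surjective absolute value,
and the induced `O`-module map `H(C_{>0}) → H(D_{>0})` is an isomorphism (expressed on
representatives: injectivity says a cycle of norm `< 1` whose image is a boundary of
`D_{>0}` is a boundary of `C_{>0}`; surjectivity says every cycle of `D_{>0}` agrees with
the image of a cycle of `C_{>0}` up to a boundary of `D_{>0}`), then
`β(C,d_C) = β(D,d_D)`. -/
theorem boundaryDepth_eq_of_filteredQuasiIso
    {K : Type*} [NormedField K] [IsUltrametricDist K] [CompleteSpace K]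
    (hsurj : ∀ r : ℝ, 0 < r → ∃ a : K, ‖a‖ = r)
    {C : Type*} [NormedAddCommGroup C] [NormedSpace K C] [CompleteSpace C]
    [IsUltrametricDist C]
    {D : Type*} [NormedAddCommGroup D] [NormedSpace K D] [CompleteSpace D]
    [IsUltrametricDist D]
    (dC : C →L[K] C) (hdC2 : ∀ x, dC (dC x) = 0) (hdC1 : ∀ x, ‖dC x‖ ≤ ‖x‖)
    (dD : D →L[K] D) (hdD2 : ∀ x, dD (dD x) = 0) (hdD1 : ∀ x, ‖dD x‖ ≤ ‖x‖)
    (f : C →L[K] D) (hchain : ∀ x, f (dC x) = dD (f x)) (hf1 : ∀ x, ‖f x‖ ≤ ‖x‖)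
    (hinj : ∀ x : C, ‖x‖ < 1 → dC x = 0 →
      f x ∈ ⇑dD '' {w : D | ‖w‖ < 1} → x ∈ ⇑dC '' {y : C | ‖y‖ < 1})
    (hsurjH : ∀ w : D, ‖w‖ < 1 → dD w = 0 →
      ∃ x : C, ‖x‖ < 1 ∧ dC x = 0 ∧ f x - w ∈ ⇑dD '' {w' : D | ‖w'‖ < 1}) :
    boundaryDepth (fun x => dC x) = boundaryDepth (fun x => dD x) :=
  boundaryDepth_eq_of_filteredQuasiIso_general hsurj dC hdC2 dD hdD2 f hchain hf1 hinj hsurjH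
end

section
/- Let (G,d₀) be a countably generated nonarchimedean normed chain complex over K with finite boundary depth β. Then range d₀ is closed, H := ker d₀ / range d₀ with the quotient norm is a nonarchimedean Banach space, and for every ε > 0 there exist special deformation retraction data (p, i, h) from (G, d₀) to (H, 0) (H regarded as a chain complex with zero differential) such that: p(x) equals the homology class of x in H for every x ∈ ker d₀; ‖p(x)‖ ≤ e^ε·‖x‖ and ‖h(x)‖ ≤ e^{β+ε}·‖x‖ for all x ∈ G; and ‖i(z)‖ ≤ e^ε·‖z‖ for all z ∈ H. -/
/-!
Since `β < ∞`, every boundary `b` has a primitive of norm at most `e^(β+δ) ‖b‖`; by the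
controlled closure theorem this makes `range d₀` closed, and then `ker d₀ / range d₀` is a
complete ultrametric normed space.

The core of the proof is that in a countably generated ultrametric Banach space every closed
subspace `S` is the range of a projection of norm at most `e^ε`. Let `v₀, v₁, …` span a dense
subspace and adjoin them to `S` one at a time. If `vₙ` is not yet in the closed subspace `F`
built so far, send it to some `u ∈ F` with `‖vₙ - u‖ ≤ e^ηₙ · dist(vₙ, F)`. This is a
retraction of `F ⊕ K vₙ` onto `F`, and by the ultrametric inequality it has norm at most
`e^ηₙ`. With `ηₙ = ε / 2^(n+1)` the composites agree on the increasing union and stay bounded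
by `e^ε`, so they extend by continuity.

Take such projections `P` onto `ker d₀` and `Q` onto `range d₀`. Set `p x = [P x]` and
`i [m] = m - Q m`, and let `h = σ ∘ Q ∘ P`, where `σ (d₀ y) = y - P y` is the primitive of a
boundary that `P` kills. These maps form the required retraction data.
-/

open scoped ENNReal

/-- The homology `ker d / range d` of a chain complex `(C,d)`, with the quotient
(semi)norm. -/
abbrev homologyOf {K : Type*} [NormedField K] {C : Type*} [NormedAddCommGroup C]
    [NormedSpace K C] (d : C →L[K] C) : Type _ :=
  ↥(LinearMap.ker (d : C →ₗ[K] C)) ⧸ Submodule.comap (LinearMap.ker (d : C →ₗ[K] C)).subtype (LinearMap.range (d : C →ₗ[K] C))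

open Real Set Submodule

theorem IsUltrametricDist.norm_sub_le_mul_of_le {E : Type*} [SeminormedAddCommGroup E]
    [IsUltrametricDist E] {x y : E} {c : ℝ} (hc : 1 ≤ c)
    (hy : ‖y‖ ≤ c * ‖x‖) : ‖x - y‖ ≤ c * ‖x‖ := by
  rw [sub_eq_add_neg]
  refine (IsUltrametricDist.norm_add_le_max x (-y)).trans (max_le ?_ (by rwa [norm_neg]))
  exact le_mul_of_one_le_left (norm_nonneg x) hc

section ClosedSubspaces

variable {K : Type*} [NormedField K] {G : Type*} [NormedAddCommGroup G] [NormedSpace K G]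

theorem norm_mul_infDist_le_norm_add_smul {F : Submodule K G} {f : G} (hf : f ∈ F) (a : K) (v : G) :
    ‖a‖ * Metric.infDist v F ≤ ‖f + a • v‖ := by
  rcases eq_or_ne a 0 with rfl | ha
  · simp
  have hmem : -(a⁻¹ • f) ∈ (F : Set G) := F.neg_mem (F.smul_mem _ hf)
  calc ‖a‖ * Metric.infDist v F ≤ ‖a‖ * dist v (-(a⁻¹ • f)) :=
        mul_le_mul_of_nonneg_left (Metric.infDist_le_dist_of_mem hmem) (norm_nonneg a)
    _ = ‖f + a • v‖ := by
        rw [dist_eq_norm, sub_neg_eq_add, ← norm_smul, smul_add, smul_smul, mul_inv_cancel₀ ha,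
          one_smul, add_comm]

theorem isClosed_span_singleton [CompleteSpace K] (w : G) :
    IsClosed ((K ∙ w : Submodule K G) : Set G) := by
  rcases eq_or_ne w 0 with rfl | hw
  · simp
  rw [span_singleton_eq_range]
  refine AntilipschitzWith.isClosed_range (K := ‖w‖₊⁻¹) ?_
    (ContinuousLinearMap.toSpanSingleton K w).uniformContinuous
  refine AddMonoidHomClass.antilipschitz_of_bound (LinearMap.toSpanSingleton K G w) fun a => ?_
  rw [LinearMap.toSpanSingleton_apply, norm_smul, NNReal.coe_inv, coe_nnnorm, mul_comm ‖a‖,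
    inv_mul_cancel_left₀ (norm_ne_zero_iff.mpr hw)]

theorem Submodule.isClosed_sup_span_singleton [CompleteSpace K] {F : Submodule K G}
    (hF : IsClosed (F : Set G)) (v : G) : IsClosed ((F ⊔ K ∙ v : Submodule K G) : Set G) := by
  rw [← comap_map_mkQ, map_span, image_singleton]
  exact (isClosed_span_singleton (G := G ⧸ F) _).preimage continuous_quot_mk

theorem exists_retraction_of_sup_span_singleton [IsUltrametricDist G] {F : Submodule K G}
    (hF : IsClosed (F : Set G)) (v : G) {η : ℝ} (hη : 0 < η) :
    ∃ r : G →ₗ[K] G, (∀ x ∈ F, r x = x) ∧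
      ∀ x ∈ F ⊔ K ∙ v, r x ∈ F ∧ ‖r x‖ ≤ exp η * ‖x‖ := by
  have hexp : 1 ≤ exp η := one_le_exp hη.le
  by_cases hv : v ∈ F
  · refine ⟨LinearMap.id, fun _ _ => rfl,
      fun x hx => ⟨?_, le_mul_of_one_le_left (norm_nonneg x) hexp⟩⟩
    rwa [sup_eq_left.mpr ((span_singleton_le_iff_mem v F).mpr hv)] at hx
  have hδ : 0 < Metric.infDist v F := (hF.notMem_iff_infDist_pos ⟨0, F.zero_mem⟩).mp hv
  -- `u ∈ F` is an almost best approximation of `v`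
  obtain ⟨u, hu, hvu⟩ := (Metric.infDist_lt_iff ⟨0, F.zero_mem⟩).mp
    (lt_mul_of_one_lt_left hδ (one_lt_exp_iff.mpr hη))
  obtain ⟨r, hrF, hrv⟩ := LinearMap.exists_extend_of_notMem F.subtype hv u
  have hr : ∀ x ∈ F, r x = x := fun x hx => LinearMap.congr_fun hrF ⟨x, hx⟩
  refine ⟨r, hr, fun x hx => ?_⟩
  obtain ⟨g, hg, _, ha, rfl⟩ := mem_sup.mp hx
  obtain ⟨a, rfl⟩ := mem_span_singleton.mp ha
  rw [map_add, map_smul, hr g hg, hrv]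
  refine ⟨F.add_mem hg (F.smul_mem a hu), ?_⟩
  have hsmall : ‖a • (v - u)‖ ≤ exp η * ‖g + a • v‖ := by
    calc ‖a • (v - u)‖ = ‖a‖ * dist v u := by rw [norm_smul, dist_eq_norm]
      _ ≤ ‖a‖ * (exp η * Metric.infDist v F) := by gcongr
      _ = exp η * (‖a‖ * Metric.infDist v F) := by ring
      _ ≤ exp η * ‖g + a • v‖ := by gcongr; exact norm_mul_infDist_le_norm_add_smul hg a v
  have hgu : g + a • v - a • (v - u) = g + a • u := by rw [smul_sub]; abel
  simpa only [hgu] using IsUltrametricDist.norm_sub_le_mul_of_le hexp hsmall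

end ClosedSubspaces

section Chains

variable {R M N : Type*} [Ring R] [AddCommGroup M] [Module R M] [AddCommGroup N] [Module R N]

def supSpanPrefix (S : Submodule R M) (v : ℕ → M) : ℕ → Submodule R M
  | 0 => S
  | n + 1 => supSpanPrefix S v n ⊔ R ∙ v n

theorem monotone_supSpanPrefix (S : Submodule R M) (v : ℕ → M) : Monotone (supSpanPrefix S v) :=
  monotone_nat_of_le_succ fun _ => le_sup_left

theorem span_range_le_iSup_supSpanPrefix (S : Submodule R M) (v : ℕ → M) :
    span R (range v) ≤ ⨆ n, supSpanPrefix S v n :=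
  span_le.mpr <| range_subset_iff.mpr fun n =>
    le_iSup (supSpanPrefix S v) (n + 1) (mem_sup_right (mem_span_singleton_self (v n)))

def prefixComp (r : ℕ → M →ₗ[R] M) : ℕ → M →ₗ[R] M
  | 0 => LinearMap.id
  | n + 1 => prefixComp r n ∘ₗ r n

theorem prefixComp_apply_of_le {F : ℕ → Submodule R M} (hF : Monotone F) {r : ℕ → M →ₗ[R] M}
    (hr : ∀ n, ∀ x ∈ F n, r n x = x) {n m : ℕ} (hnm : n ≤ m) {x : M} (hx : x ∈ F n) :
    prefixComp r m x = prefixComp r n x := by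
  induction m, hnm using Nat.le_induction with
  | base => rfl
  | succ m hnm ih => rw [prefixComp, LinearMap.comp_apply, hr m x (hF hnm hx), ih]

theorem exists_linearPMap_of_chain {F : ℕ → Submodule R M} (hF : Monotone F) (f : ℕ → M →ₗ[R] N)
    (hf : ∀ n m, n ≤ m → ∀ x ∈ F n, f m x = f n x) :
    ∃ L : M →ₗ.[R] N, (∀ n, F n ≤ L.domain) ∧ ∀ x : L.domain, ∃ n, (x : M) ∈ F n ∧ L x = f n x := by
  let g : ℕ → M →ₗ.[R] N := fun n => (f n).toPMap (F n)
  have hg : Monotone g := fun n m hnm =>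
    ⟨hF hnm, fun x y hxy => by
      change f n x = f m y
      rw [← hxy, hf n m hnm x x.2]⟩
  have hdir : DirectedOn (· ≤ ·) (range g) := directedOn_range.mpr hg.directed_le
  refine ⟨LinearPMap.sSup _ hdir, fun n => (LinearPMap.le_sSup hdir ⟨n, rfl⟩).1, fun x => ?_⟩
  obtain ⟨_, ⟨n, rfl⟩, hx⟩ :=
    (LinearPMap.mem_domain_sSup_iff (range_nonempty g) hdir).mp x.2
  exact ⟨n, hx, ((LinearPMap.le_sSup hdir ⟨n, rfl⟩).2 (x := ⟨x, hx⟩) rfl).symm⟩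

end Chains

section Projections

variable {K : Type*} [NormedField K] {G : Type*} [NormedAddCommGroup G] [NormedSpace K G]

theorem prefixComp_mem_and_norm_le {F : ℕ → Submodule K G} {r : ℕ → G →ₗ[K] G} {η : ℕ → ℝ}
    (hr : ∀ n, ∀ x ∈ F (n + 1), r n x ∈ F n ∧ ‖r n x‖ ≤ exp (η n) * ‖x‖) (n : ℕ) :
    ∀ x ∈ F n, prefixComp r n x ∈ F 0 ∧
      ‖prefixComp r n x‖ ≤ exp (∑ k ∈ Finset.range n, η k) * ‖x‖ := by
  induction n with
  | zero => exact fun x hx => ⟨hx, by simp [prefixComp]⟩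
  | succ n ih =>
    intro x hx
    obtain ⟨hmem, hnorm⟩ := ih _ (hr n x hx).1
    refine ⟨hmem, hnorm.trans ?_⟩
    rw [Finset.sum_range_succ, exp_add, mul_assoc]
    exact mul_le_mul_of_nonneg_left (hr n x hx).2 (exp_pos _).le

theorem Submodule.exists_extension_of_dense {E F : Type*} [NormedAddCommGroup E] [NormedSpace K E]
    [NormedAddCommGroup F] [NormedSpace K F] [CompleteSpace F] {U : Submodule K E}
    (hU : Dense (U : Set E)) (L : U →ₗ[K] F) {C : ℝ} (hL : ∀ x, ‖L x‖ ≤ C * ‖x‖) :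
    ∃ P : E →L[K] F, (∀ x : U, P x = L x) ∧ ∀ x, ‖P x‖ ≤ C * ‖x‖ := by
  have hdense : DenseRange U.subtypeL := hU.denseRange_val
  have hind : IsUniformInducing U.subtypeL := isUniformEmbedding_subtype_val.isUniformInducing
  set P := (L.mkContinuous C hL).extend U.subtypeL
  have hPL : ∀ x : U, P x = L x := fun x => (L.mkContinuous C hL).extend_eq hdense hind x
  refine ⟨P, hPL, fun x => hdense.induction_on x ?_ fun x => ?_⟩
  · exact isClosed_le P.continuous.norm (continuous_const.mul continuous_norm)
  · simpa [hPL] using hL x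

theorem isClosed_supSpanPrefix [CompleteSpace K] {S : Submodule K G} (hS : IsClosed (S : Set G))
    (v : ℕ → G) (n : ℕ) : IsClosed (supSpanPrefix S v n : Set G) := by
  induction n with
  | zero => exact hS
  | succ n ih => exact Submodule.isClosed_sup_span_singleton ih (v n)

theorem exists_isProj_norm_le [CompleteSpace K] [CompleteSpace G] [IsUltrametricDist G]
    {v : ℕ → G} (hv : Dense (span K (range v) : Set G)) {S : Submodule K G}
    (hS : IsClosed (S : Set G)) {ε : ℝ} (hε : 0 < ε) :
    ∃ P : G →ₗ[K] G, LinearMap.IsProj S P ∧ ∀ x, ‖P x‖ ≤ exp ε * ‖x‖ := by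
  have hF := monotone_supSpanPrefix S v
  set η : ℕ → ℝ := fun n => ε / 2 * (1 / 2) ^ n
  have hη : ∀ n, ∑ k ∈ Finset.range n, η k ≤ ε := fun n => by
    rw [← Finset.mul_sum]
    nlinarith [sum_geometric_two_le n]
  choose r hrF hr using fun n =>
    exists_retraction_of_sup_span_singleton (isClosed_supSpanPrefix hS v n) (v n)
      (show 0 < η n by positivity)
  have hcompat := fun n m (hnm : n ≤ m) x (hx : x ∈ supSpanPrefix S v n) =>
    prefixComp_apply_of_le hF hrF hnm hx
  obtain ⟨L, hLdom, hL⟩ := exists_linearPMap_of_chain hF (prefixComp r) hcompat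
  have hLS : ∀ x : L.domain, L x ∈ S ∧ ‖L x‖ ≤ exp ε * ‖x‖ := by
    intro x
    obtain ⟨n, hxn, hLx⟩ := hL x
    obtain ⟨hmem, hnorm⟩ := prefixComp_mem_and_norm_le (F := supSpanPrefix S v) hr n x hxn
    rw [hLx]
    exact ⟨hmem, hnorm.trans (mul_le_mul_of_nonneg_right (exp_le_exp.mpr (hη n)) (norm_nonneg _))⟩
  have hdense : Dense (L.domain : Set G) :=
    hv.mono ((span_range_le_iSup_supSpanPrefix S v).trans (iSup_le hLdom))
  have := hS.completeSpace_coe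
  obtain ⟨P, hPL, hP⟩ := Submodule.exists_extension_of_dense hdense
    (L.toFun.codRestrict S fun x => (hLS x).1) fun x => (hLS x).2
  refine ⟨S.subtype ∘ₗ P.toLinearMap, ⟨fun x => (P x).2, fun x hx => ?_⟩, hP⟩
  obtain ⟨n, hxn, hLx⟩ := hL ⟨x, hLdom 0 hx⟩
  calc (P x : G) = L ⟨x, hLdom 0 hx⟩ := congrArg Subtype.val (hPL ⟨x, hLdom 0 hx⟩)
    _ = prefixComp r 0 x := hLx.trans (hcompat 0 n n.zero_le x hx)
    _ = x := rfl

end Projections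

section BoundaryDepth

variable {C F : Type*} [NormedAddCommGroup C] [FunLike F C C]

theorem exists_preimage_norm_le_of_boundaryDepth_lt [ZeroHomClass F C C] (d : F) {γ : ℝ}
    (hγ : boundaryDepth d < ENNReal.ofReal γ) {x : C} (hx : x ∈ range d) :
    ∃ y, d y = x ∧ ‖y‖ ≤ exp γ * ‖x‖ := by
  rcases eq_or_ne x 0 with rfl | hx0
  · exact ⟨0, map_zero d, by simp⟩
  have hd : ¬∀ z, d z = 0 := fun h => hx0 (hx.choose_spec ▸ h _)
  have hinf : ⨅ y ∈ {y | d y = x}, ENNReal.ofReal (log ‖y‖ - log ‖x‖) < ENNReal.ofReal γ := by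
    refine lt_of_le_of_lt ?_ hγ
    rw [boundaryDepth, if_neg hd]
    exact le_iSup₂ (f := fun z (_ : z ∈ {z : C | z ≠ 0 ∧ ∃ y, d y = z}) =>
      ⨅ y ∈ {y | d y = z}, ENNReal.ofReal (log ‖y‖ - log ‖z‖)) x ⟨hx0, hx⟩
  obtain ⟨y, hy⟩ := iInf_lt_iff.mp hinf
  obtain ⟨hyx, hlt⟩ := iInf_lt_iff.mp hy
  refine ⟨y, hyx, ?_⟩
  rcases eq_or_ne y 0 with rfl | hy0
  · simp only [norm_zero]; positivity
  have hlog : log ‖y‖ < γ + log ‖x‖ := by linarith [(ENNReal.ofReal_lt_ofReal_iff'.mp hlt).1]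
  rw [log_lt_iff_lt_exp (norm_pos_iff.mpr hy0), exp_add, exp_log (norm_pos_iff.mpr hx0)] at hlog
  exact hlog.le

theorem isClosed_range_of_boundaryDepth_lt [CompleteSpace C] [AddMonoidHomClass F C C] (d : F)
    {M : ℝ} (hM : ∀ x, ‖d x‖ ≤ M * ‖x‖) {γ : ℝ} (hγ : boundaryDepth d < ENNReal.ofReal γ) :
    IsClosed (range d) := by
  let f : NormedAddGroupHom C C := AddMonoidHom.mkNormedAddGroupHom (d : C →+ C) M hM
  have hsurj : f.SurjectiveOnWith (d : C →+ C).range (exp γ) := fun x hx =>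
    exists_preimage_norm_le_of_boundaryDepth_lt d hγ hx
  refine isClosed_of_closure_subset fun x hx => ?_
  obtain ⟨y, hy, -⟩ := controlled_closure_of_complete (exp_pos γ) one_pos hsurj x hx
  exact ⟨y, hy⟩

end BoundaryDepth

section QuotientNorm

variable {R M E : Type*} [Ring R] [SeminormedAddCommGroup M] [Module R M]
  [SeminormedAddCommGroup E] {S : Submodule R M}

theorem Submodule.Quotient.norm_apply_le_of_forall_mk (f : M ⧸ S → E) {c : ℝ} (hc : 0 ≤ c)
    (hf : ∀ m, ‖f (Submodule.Quotient.mk m)‖ ≤ c * ‖m‖) (z : M ⧸ S) : ‖f z‖ ≤ c * ‖z‖ := by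
  refine le_of_forall_pos_le_add fun η hη => ?_
  obtain ⟨m, rfl, hm⟩ := Submodule.Quotient.norm_mk_lt z (show 0 < η / (c + 1) by positivity)
  calc ‖f (Submodule.Quotient.mk m)‖ ≤ c * ‖m‖ := hf m
    _ ≤ c * (‖(Submodule.Quotient.mk m : M ⧸ S)‖ + η / (c + 1)) := by gcongr
    _ ≤ c * ‖(Submodule.Quotient.mk m : M ⧸ S)‖ + η := by
        rw [mul_add, add_le_add_iff_left, mul_div_assoc', div_le_iff₀ (by positivity)]
        nlinarith

instance Submodule.Quotient.isUltrametricDist [IsUltrametricDist M] :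
    IsUltrametricDist (M ⧸ S) := by
  refine IsUltrametricDist.isUltrametricDist_of_forall_norm_add_le_max_norm fun z w =>
    le_of_forall_pos_lt_add fun η hη => ?_
  obtain ⟨m, rfl, hm⟩ := Submodule.Quotient.norm_mk_lt z hη
  obtain ⟨n, rfl, hn⟩ := Submodule.Quotient.norm_mk_lt w hη
  calc ‖(Submodule.Quotient.mk m + Submodule.Quotient.mk n : M ⧸ S)‖ ≤ ‖m + n‖ := by
        rw [← Submodule.Quotient.mk_add]; exact Submodule.Quotient.norm_mk_le S _
    _ ≤ max ‖m‖ ‖n‖ := IsUltrametricDist.norm_add_le_max m n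
    _ < _ := by rw [← max_add_add_right]; exact max_lt_max hm hn

end QuotientNorm

namespace HomologyRetraction

variable {K : Type*} [NormedField K] {G : Type*} [NormedAddCommGroup G] [NormedSpace K G]

abbrev cycles (d : G →L[K] G) : Submodule K G := LinearMap.ker (d : G →ₗ[K] G)

abbrev boundaries (d : G →L[K] G) : Submodule K G := LinearMap.range (d : G →ₗ[K] G)

variable (d : G →L[K] G) {P Q : G →ₗ[K] G}

theorem boundaries_le_cycles (hd2 : ∀ x, d (d x) = 0) : boundaries d ≤ cycles d := by
  rintro _ ⟨x, rfl⟩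
  exact hd2 x

def toHomology (hP : LinearMap.IsProj (cycles d) P) : G →ₗ[K] homologyOf d :=
  mkQ _ ∘ₗ P.codRestrict (cycles d) hP.map_mem

def ofHomology (hQ : LinearMap.IsProj (boundaries d) Q) : homologyOf d →ₗ[K] G :=
  liftQ _ ((cycles d).subtype - Q ∘ₗ (cycles d).subtype) fun m hm => by
    simp [hQ.map_id m hm]

noncomputable def primitive (hP : LinearMap.IsProj (cycles d) P) : boundaries d →ₗ[K] G :=
  (cycles d).liftQ (LinearMap.id - P) (fun x hx => by simp [hP.map_id x hx]) ∘ₗ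
    (d : G →ₗ[K] G).quotKerEquivRange.symm

noncomputable def homotopy (hP : LinearMap.IsProj (cycles d) P)
    (hQ : LinearMap.IsProj (boundaries d) Q) : G →ₗ[K] G :=
  primitive d hP ∘ₗ (Q ∘ₗ P).codRestrict (boundaries d) fun x => hQ.map_mem (P x)

variable (hP : LinearMap.IsProj (cycles d) P) (hQ : LinearMap.IsProj (boundaries d) Q)

theorem toHomology_apply (x : G) :
    toHomology d hP x = Submodule.Quotient.mk ⟨P x, hP.map_mem x⟩ := rfl

theorem ofHomology_mk (m : cycles d) :
    ofHomology d hQ (Submodule.Quotient.mk m) = m - Q m := rfl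

theorem primitive_apply (y : G) : primitive d hP ⟨d y, y, rfl⟩ = y - P y := by
  rw [primitive, LinearMap.comp_apply]
  erw [LinearMap.quotKerEquivRange_symm_apply_image]
  rfl

theorem map_primitive (b : boundaries d) : d (primitive d hP b) = b := by
  obtain ⟨y, hy⟩ := b.2
  obtain rfl : b = ⟨d y, y, rfl⟩ := Subtype.ext hy.symm
  rw [primitive_apply, map_sub, show d (P y) = 0 from hP.map_mem y, sub_zero]

theorem proj_primitive (b : boundaries d) : P (primitive d hP b) = 0 := by
  obtain ⟨y, hy⟩ := b.2
  obtain rfl : b = ⟨d y, y, rfl⟩ := Subtype.ext hy.symm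
  rw [primitive_apply, map_sub, hP.map_id _ (hP.map_mem y), sub_self]

theorem homotopy_apply (x : G) :
    homotopy d hP hQ x = primitive d hP ⟨Q (P x), hQ.map_mem _⟩ := rfl

theorem toHomology_of_mem {x : G} (hx : x ∈ cycles d) :
    toHomology d hP x = Submodule.Quotient.mk ⟨x, hx⟩ := by
  simp only [toHomology_apply, hP.map_id x hx]

theorem toHomology_map (hd2 : ∀ x, d (d x) = 0) (x : G) : toHomology d hP (d x) = 0 := by
  rw [toHomology_of_mem d hP (hd2 x), Submodule.Quotient.mk_eq_zero]
  exact ⟨x, rfl⟩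

theorem map_ofHomology (hd2 : ∀ x, d (d x) = 0) (z : homologyOf d) : d (ofHomology d hQ z) = 0 := by
  induction z using Submodule.Quotient.induction_on with | _ m
  have hm : d m = 0 := m.2
  have hQm : d (Q m) = 0 := boundaries_le_cycles d hd2 (hQ.map_mem m)
  rw [ofHomology_mk, map_sub, hm, hQm, sub_self]

theorem toHomology_ofHomology (hd2 : ∀ x, d (d x) = 0) (z : homologyOf d) :
    toHomology d hP (ofHomology d hQ z) = z := by
  induction z using Submodule.Quotient.induction_on with | _ m
  rw [toHomology_of_mem d hP (map_ofHomology d hQ hd2 _), Submodule.Quotient.eq]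
  simpa [ofHomology_mk] using neg_mem (hQ.map_mem m)

theorem homotopy_map (hd2 : ∀ x, d (d x) = 0) (x : G) : homotopy d hP hQ (d x) = x - P x := by
  have h : Q (P (d x)) = d x := by rw [hP.map_id _ (hd2 x), hQ.map_id (d x) ⟨x, rfl⟩]
  rw [homotopy_apply, show (⟨Q (P (d x)), _⟩ : boundaries d) = ⟨d x, x, rfl⟩ from Subtype.ext h,
    primitive_apply]

theorem map_homotopy (x : G) : d (homotopy d hP hQ x) = Q (P x) :=
  map_primitive d hP _

theorem sub_ofHomology_toHomology (hd2 : ∀ x, d (d x) = 0) (x : G) :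
    x - ofHomology d hQ (toHomology d hP x) = homotopy d hP hQ (d x) + d (homotopy d hP hQ x) := by
  rw [toHomology_apply, ofHomology_mk, homotopy_map d hP hQ hd2, map_homotopy]
  abel

theorem homotopy_eq_zero {x : G} (hx : Q (P x) = 0) : homotopy d hP hQ x = 0 := by
  rw [homotopy_apply, show (⟨Q (P x), _⟩ : boundaries d) = 0 from Subtype.ext hx, map_zero]

theorem homotopy_homotopy (x : G) :
    homotopy d hP hQ (homotopy d hP hQ x) = 0 :=
  homotopy_eq_zero d hP hQ (by rw [homotopy_apply, proj_primitive, map_zero])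

theorem homotopy_ofHomology (hd2 : ∀ x, d (d x) = 0) (z : homologyOf d) :
    homotopy d hP hQ (ofHomology d hQ z) = 0 := by
  refine homotopy_eq_zero d hP hQ ?_
  rw [hP.map_id _ (map_ofHomology d hQ hd2 z)]
  induction z using Submodule.Quotient.induction_on with | _ m
  rw [ofHomology_mk, map_sub, hQ.map_id _ (hQ.map_mem m), sub_self]

theorem toHomology_homotopy (x : G) : toHomology d hP (homotopy d hP hQ x) = 0 := by
  rw [toHomology_apply, Submodule.Quotient.mk_eq_zero]
  simp [homotopy_apply, proj_primitive]

variable {cP cQ : ℝ} (hPn : ∀ x, ‖P x‖ ≤ cP * ‖x‖) (hQn : ∀ x, ‖Q x‖ ≤ cQ * ‖x‖)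

include hPn in
theorem norm_toHomology_le (x : G) : ‖toHomology d hP x‖ ≤ cP * ‖x‖ :=
  (Submodule.Quotient.norm_mk_le _ _).trans (hPn x)

include hQn in
theorem norm_ofHomology_le [IsUltrametricDist G] (hcQ : 1 ≤ cQ) (z : homologyOf d) :
    ‖ofHomology d hQ z‖ ≤ cQ * ‖z‖ :=
  Submodule.Quotient.norm_apply_le_of_forall_mk (ofHomology d hQ) (by linarith)
    (fun m => IsUltrametricDist.norm_sub_le_mul_of_le hcQ (hQn m)) z

include hPn in
theorem norm_primitive_le [IsUltrametricDist G] (hcP : 1 ≤ cP) {c : ℝ}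
    (hdep : ∀ b ∈ boundaries d, ∃ y, d y = b ∧ ‖y‖ ≤ c * ‖b‖) (b : boundaries d) :
    ‖primitive d hP b‖ ≤ cP * c * ‖b‖ := by
  obtain ⟨y, hy, hyb⟩ := hdep b b.2
  obtain rfl : b = ⟨d y, y, rfl⟩ := Subtype.ext hy.symm
  rw [primitive_apply, mul_assoc]
  exact (IsUltrametricDist.norm_sub_le_mul_of_le hcP (hPn y)).trans
    (mul_le_mul_of_nonneg_left hyb (by linarith))

include hPn hQn in
theorem norm_homotopy_le [IsUltrametricDist G] (hcP : 1 ≤ cP) (hcQ : 0 ≤ cQ) {c : ℝ} (hc : 0 ≤ c)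
    (hdep : ∀ b ∈ boundaries d, ∃ y, d y = b ∧ ‖y‖ ≤ c * ‖b‖) (x : G) :
    ‖homotopy d hP hQ x‖ ≤ cP * c * cQ * cP * ‖x‖ := by
  rw [homotopy_apply]
  refine (norm_primitive_le d hP hPn hcP hdep _).trans ?_
  calc cP * c * ‖Q (P x)‖ ≤ cP * c * (cQ * (cP * ‖x‖)) :=
        mul_le_mul_of_nonneg_left ((hQn _).trans (mul_le_mul_of_nonneg_left (hPn x) hcQ))
          (mul_nonneg (by linarith) hc)
    _ = cP * c * cQ * cP * ‖x‖ := by ring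

end HomologyRetraction

open HomologyRetraction

theorem exists_dense_span_range {K G : Type*} [Semiring K] [AddCommMonoid G] [Module K G]
    [TopologicalSpace G] (h : ∃ s : Set G, s.Countable ∧ Dense (span K s : Set G)) :
    ∃ v : ℕ → G, Dense (span K (range v) : Set G) := by
  obtain ⟨s, hs, hdense⟩ := h
  obtain ⟨v, hv⟩ := (hs.insert 0).exists_eq_range (insert_nonempty 0 s)
  exact ⟨v, by rwa [← hv, span_insert_zero]⟩

theorem exists_special_deformation_retraction_to_homology_general
    {K : Type*} [NormedField K] [CompleteSpace K]
    {G : Type*} [NormedAddCommGroup G] [NormedSpace K G] [CompleteSpace G]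
    [IsUltrametricDist G]
    (hgen : ∃ s : Set G, s.Countable ∧ Dense ((Submodule.span K s : Submodule K G) : Set G))
    (d : G →L[K] G) (hd2 : ∀ x, d (d x) = 0) (hd1 : ∀ x, ‖d x‖ ≤ ‖x‖)
    (β : ℝ) (hβ0 : 0 ≤ β) (hβ : boundaryDepth (fun x => d x) = ENNReal.ofReal β) :
    IsClosed (Set.range fun x : G => d x) ∧
    (∀ z : homologyOf d, ‖z‖ = 0 → z = 0) ∧
    (∀ z w : homologyOf d, ‖z + w‖ ≤ max ‖z‖ ‖w‖) ∧
    CompleteSpace (homologyOf d) ∧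
    ∀ ε : ℝ, 0 < ε →
      ∃ (p : G →L[K] homologyOf d) (i : homologyOf d →L[K] G) (h : G →L[K] G),
        (∀ (x : G) (hx : x ∈ LinearMap.ker (d : G →ₗ[K] G)),
          p x = (Submodule.Quotient.mk ⟨x, hx⟩ : homologyOf d)) ∧
        (∀ x : G, p (d x) = 0) ∧
        (∀ z : homologyOf d, d (i z) = 0) ∧
        (∀ z : homologyOf d, p (i z) = z) ∧
        (∀ x : G, x - i (p x) = h (d x) + d (h x)) ∧
        (∀ x : G, h (h x) = 0) ∧
        (∀ z : homologyOf d, h (i z) = 0) ∧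
        (∀ x : G, p (h x) = 0) ∧
        (∀ x : G, ‖p x‖ ≤ Real.exp ε * ‖x‖) ∧
        (∀ x : G, ‖h x‖ ≤ Real.exp (β + ε) * ‖x‖) ∧
        (∀ z : homologyOf d, ‖i z‖ ≤ Real.exp ε * ‖z‖) := by
  have hdepth : ∀ δ > 0, boundaryDepth d < ENNReal.ofReal (β + δ) := fun δ hδ =>
    hβ ▸ ENNReal.ofReal_lt_ofReal_iff'.mpr ⟨by linarith, by linarith⟩
  have hB : IsClosed (boundaries d : Set G) :=
    isClosed_range_of_boundaryDepth_lt d (M := 1) (by simpa using hd1) (hdepth 1 one_pos)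
  have hZ : IsClosed (cycles d : Set G) := d.isClosed_ker
  -- this instance makes `homologyOf d` a `NormedAddCommGroup`
  have : IsClosed (comap (cycles d).subtype (boundaries d) : Set (cycles d)) :=
    hB.preimage continuous_subtype_val
  have := hZ.completeSpace_coe
  refine ⟨hB, fun z => norm_eq_zero.mp, IsUltrametricDist.norm_add_le_max, inferInstance,
    fun ε hε => ?_⟩
  obtain ⟨v, hv⟩ := exists_dense_span_range hgen
  obtain ⟨P, hP, hPn⟩ := exists_isProj_norm_le hv hZ (show 0 < ε / 4 by positivity)
  obtain ⟨Q, hQ, hQn⟩ := exists_isProj_norm_le hv hB (show 0 < ε / 4 by positivity)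
  have hdep := fun b (hb : b ∈ boundaries d) =>
    exists_preimage_norm_le_of_boundaryDepth_lt d (hdepth (ε / 4) (by positivity)) hb
  have hexp : 1 ≤ exp (ε / 4) := one_le_exp (by positivity)
  have hconst : exp (ε / 4) * exp (β + ε / 4) * exp (ε / 4) * exp (ε / 4) = exp (β + ε) := by
    simp only [← exp_add]; ring_nf
  refine ⟨(toHomology d hP).mkContinuous _ (norm_toHomology_le d hP hPn),
    (ofHomology d hQ).mkContinuous _ (norm_ofHomology_le d hQ hQn hexp),
    (homotopy d hP hQ).mkContinuous _
      (norm_homotopy_le d hP hQ hPn hQn hexp (exp_pos _).le (exp_pos _).le hdep),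
    fun x => toHomology_of_mem d hP, toHomology_map d hP hd2, map_ofHomology d hQ hd2,
    toHomology_ofHomology d hP hQ hd2, sub_ofHomology_toHomology d hP hQ hd2,
    homotopy_homotopy d hP hQ, homotopy_ofHomology d hP hQ hd2, toHomology_homotopy d hP hQ,
    fun x => ?_, fun x => ?_, fun z => ?_⟩
  · exact (norm_toHomology_le d hP hPn x).trans (by gcongr; linarith)
  · exact (norm_homotopy_le d hP hQ hPn hQn hexp (exp_pos _).le (exp_pos _).le hdep x).trans_eq
      (by rw [hconst])
  · exact (norm_ofHomology_le d hQ hQn hexp z).trans (by gcongr; linarith)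

/-- Let `(G,d₀)` be a countably generated nonarchimedean normed chain
complex over `K` with finite boundary depth `β`. Then `range d₀` is closed,
`H := ker d₀ / range d₀` with the quotient norm is a nonarchimedean Banach space, and for
every `ε > 0` there are special deformation retraction data `(p, i, h)` from `(G, d₀)` to
`(H, 0)` such that `p` sends a cycle to its homology class, `‖p x‖ ≤ e^ε ‖x‖`,
`‖h x‖ ≤ e^{β+ε} ‖x‖` and `‖i z‖ ≤ e^ε ‖z‖`. -/
theorem exists_special_deformation_retraction_to_homology
    {K : Type*} [NormedField K] [IsUltrametricDist K] [CompleteSpace K]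
    {G : Type*} [NormedAddCommGroup G] [NormedSpace K G] [CompleteSpace G]
    [IsUltrametricDist G]
    (hgen : ∃ s : Set G, s.Countable ∧ Dense ((Submodule.span K s : Submodule K G) : Set G))
    (d : G →L[K] G) (hd2 : ∀ x, d (d x) = 0) (hd1 : ∀ x, ‖d x‖ ≤ ‖x‖)
    (β : ℝ) (hβ0 : 0 ≤ β) (hβ : boundaryDepth (fun x => d x) = ENNReal.ofReal β) :
    IsClosed (Set.range fun x : G => d x) ∧
    (∀ z : homologyOf d, ‖z‖ = 0 → z = 0) ∧
    (∀ z w : homologyOf d, ‖z + w‖ ≤ max ‖z‖ ‖w‖) ∧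
    CompleteSpace (homologyOf d) ∧
    ∀ ε : ℝ, 0 < ε →
      ∃ (p : G →L[K] homologyOf d) (i : homologyOf d →L[K] G) (h : G →L[K] G),
        (∀ (x : G) (hx : x ∈ LinearMap.ker (d : G →ₗ[K] G)),
          p x = (Submodule.Quotient.mk ⟨x, hx⟩ : homologyOf d)) ∧
        (∀ x : G, p (d x) = 0) ∧
        (∀ z : homologyOf d, d (i z) = 0) ∧
        (∀ z : homologyOf d, p (i z) = z) ∧
        (∀ x : G, x - i (p x) = h (d x) + d (h x)) ∧
        (∀ x : G, h (h x) = 0) ∧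
        (∀ z : homologyOf d, h (i z) = 0) ∧
        (∀ x : G, p (h x) = 0) ∧
        (∀ x : G, ‖p x‖ ≤ Real.exp ε * ‖x‖) ∧
        (∀ x : G, ‖h x‖ ≤ Real.exp (β + ε) * ‖x‖) ∧
        (∀ z : homologyOf d, ‖i z‖ ≤ Real.exp ε * ‖z‖) :=
  exists_special_deformation_retraction_to_homology_general hgen d hd2 hd1 β hβ0 hβ
end
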